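/- Let X be an irreducible shift of finite type, Y a sofic shift, pi: X -> Y an almost invertible factor code, and mu a fully supported, shift-invariant, ergodic, T_X-nonsingular measure on X. Then the pushforward nu = pi_* mu is T_Y-nonsingular. Moreover, if mu is a Gibbs measure for an additive cocycle phi on T_X, then nu is a Gibbs measure for the cocycle phi o (pi^{-1} x pi^{-1}), where pi^{-1} is defined nu-almost everywhere (on the doubly transitive points). -/

import Mathlib

open MeasureTheory
open scoped ENNReal

/-- The left shift by `k` on bi-infinite sequences. `shiftZ 1` is the shift map `σ`. -/
def shiftZ {A : Type*} (k : ℤ) (x : ℤ → A) : ℤ → A := fun n => x (n + k)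

/-- The word `w` occurs in `x` at position `i`. -/
def occursAt {A : Type*} (x : ℤ → A) (w : List A) (i : ℤ) : Prop :=
  ∀ j : Fin w.length, x (i + (j.1 : ℤ)) = w.get j

/-- The word `w` belongs to the language of `X`. -/
def InLanguage {A : Type*} (X : Set (ℤ → A)) (w : List A) : Prop :=
  ∃ x ∈ X, ∃ i : ℤ, occursAt x w i

/-- A shift space: a closed, shift-invariant subset of the full shift. -/
def IsShiftSpace {A : Type*} [TopologicalSpace A] (X : Set (ℤ → A)) : Prop :=
  IsClosed X ∧ ∀ k : ℤ, ∀ x ∈ X, shiftZ k x ∈ X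

/-- `x` is doubly transitive in `X`. -/
def DoublyTransitive {A : Type*} (X : Set (ℤ → A)) (x : ℤ → A) : Prop :=
  ∀ w : List A, InLanguage X w →
    (∀ N : ℤ, ∃ i : ℤ, N ≤ i ∧ occursAt x w i) ∧
    (∀ N : ℤ, ∃ i : ℤ, i ≤ N ∧ occursAt x w i)

/-- Irreducibility: any two words of the language can be joined within the language. -/
def IrreducibleShift {A : Type*} (X : Set (ℤ → A)) : Prop :=
  ∀ u v : List A, InLanguage X u → InLanguage X v →
    ∃ w : List A, InLanguage X (u ++ w ++ v)

/-- `μ` is fully supported on `X`: every open set meeting `X` has positive measure. -/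
def FullSupportOn {A : Type*} [TopologicalSpace A] [MeasurableSpace A]
    (μ : Measure (ℤ → A)) (X : Set (ℤ → A)) : Prop :=
  ∀ U : Set (ℤ → A), IsOpen U → (U ∩ X).Nonempty → 0 < μ U

/-- The Gibbs (homoclinic/tail) relation on `X`. -/
def GibbsRel {A : Type*} (X : Set (ℤ → A)) (x y : ℤ → A) : Prop :=
  x ∈ X ∧ y ∈ X ∧ ∃ N : ℤ, ∀ n : ℤ, N < |n| → x n = y n

/-- A shift of finite type: defined by excluding a finite set of words of some length `n`. -/
def IsSFT {A : Type*} (X : Set (ℤ → A)) : Prop :=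
  ∃ (n : ℕ) (F : Finset (List A)),
    X = {x | ∀ i : ℤ, (List.ofFn fun j : Fin n => x (i + (j.1 : ℤ))) ∉ F}

/-- `μ` is nonsingular for the relation `Rel`: the saturation of any null Borel set is null. -/
def NonsingularFor {P : Type*} [MeasurableSpace P]
    (μ : Measure P) (Rel : P → P → Prop) : Prop :=
  ∀ S : Set P, MeasurableSet S → μ S = 0 → μ {y | ∃ x ∈ S, Rel x y} = 0

/-- A holonomy of the relation `Rel`: a Borel isomorphism `ψ : S → T` between Borel sets
moving every point within its `Rel`-class. -/
def IsHolonomy {P : Type*} [MeasurableSpace P] (Rel : P → P → Prop)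
    (S T : Set P) (ψ : P → P) : Prop :=
  MeasurableSet S ∧ MeasurableSet T ∧ Set.BijOn ψ S T ∧
  (∀ E : Set P, E ⊆ S → MeasurableSet E → MeasurableSet (ψ '' E)) ∧
  (∀ E : Set P, E ⊆ T → MeasurableSet E → MeasurableSet (S ∩ ψ ⁻¹' E)) ∧
  ∀ z ∈ S, Rel z (ψ z)

/-- `μ` is a Gibbs measure for the additive cocycle `φ` on the relation `Rel`: for every
holonomy `ψ : S → T` of `Rel`, the Radon-Nikodym derivative of `μ ∘ ψ` with respect to `μ`
at `z` is `exp (φ z (ψ z))`. -/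
def IsGibbsMeasure {P : Type*} [MeasurableSpace P] (μ : Measure P)
    (Rel : P → P → Prop) (φ : P → P → ℝ) : Prop :=
  ∀ S T ψ, IsHolonomy Rel S T ψ → ∀ E : Set P, E ⊆ S → MeasurableSet E →
    μ (ψ '' E) = ∫⁻ z in E, ENNReal.ofReal (Real.exp (φ z (ψ z))) ∂μ

/-!
Off a null set everything happens at doubly transitive points, where `π` is injective, so
`ν = π_* μ` is `μ` transported by a Borel isomorphism and it remains to match the two Gibbs
relations. If `π x` and `π x'` are doubly transitive and tail equivalent, so are `x` and `x'`:
since `π x` has a unique preimage, by compactness a long central block of `π x` forces the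
central block of `x` wherever it occurs, and it occurs in `π x` and `π x'` arbitrarily far out
on both sides. There `x` and `x'` agree on a window longer than the memory of the SFT, so
splicing them gives a point of `X` over `π x'`, which is `x'` by uniqueness. Holonomies of `T_Y`
therefore lift to holonomies of `T_X`, and the Gibbs identity is transported by change of
variables; the part of a holonomy that leaves the doubly transitive points is null by
nonsingularity.
-/

open Set Function

section Holonomy

variable {P : Type*} [MeasurableSpace P] {R : P → P → Prop}

lemma IsHolonomy.of_subset {S T S' : Set P} {ψ : P → P} (hψ : IsHolonomy R S T ψ)
    (hS' : S' ⊆ S) (hS'm : MeasurableSet S') : IsHolonomy R S' (ψ '' S') ψ := by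
  obtain ⟨-, -, hbij, himg, hpre, hrel⟩ := hψ
  have hT' : ψ '' S' ⊆ T := (image_mono hS').trans hbij.image_eq.subset
  refine ⟨hS'm, himg S' hS' hS'm, (hbij.injOn.mono hS').bijOn_image,
    fun E hE => himg E (hE.trans hS'), fun E hE hEm => ?_, fun z hz => hrel z (hS' hz)⟩
  rw [← inter_eq_left.2 hS', inter_assoc]
  exact hS'm.inter (hpre E (hE.trans hT') hEm)

/-- The part of a holonomy that leaves the conull set `G` is null by nonsingularity. -/
lemma isGibbsMeasure_of_subset_conull {ν : Measure P} {φ : P → P → ℝ} {G : Set P}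
    (hns : NonsingularFor ν R) (hsymm : ∀ x y, R x y → R y x) (hG : MeasurableSet G)
    (hGc : ν Gᶜ = 0)
    (h : ∀ S T ψ, IsHolonomy R S T ψ → S ⊆ G → T ⊆ G → ∀ E ⊆ S, MeasurableSet E →
      ν (ψ '' E) = ∫⁻ z in E, ENNReal.ofReal (Real.exp (φ z (ψ z))) ∂ν) :
    IsGibbsMeasure ν R φ := by
  intro S T ψ hψ E hES hEm
  set S₁ := G ∩ (S ∩ ψ ⁻¹' (T ∩ G))
  have hS₁m : MeasurableSet S₁ := hG.inter (hψ.2.2.2.2.1 _ inter_subset_left (hψ.2.1.inter hG))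
  have hψ₁ := hψ.of_subset (fun z hz => hz.2.1) hS₁m
  obtain ⟨-, -, hbij, -, -, hrel⟩ := hψ
  have hES₁ : ν (E \ S₁) = 0 := by
    refine measure_mono_null (fun z hz => ?_) (measure_union_null hGc (hns _ hG.compl hGc))
    by_cases hzG : z ∈ G
    · have hψz : ψ z ∉ G := fun h => hz.2 ⟨hzG, hES hz.1, hbij.mapsTo (hES hz.1), h⟩
      exact Or.inr ⟨ψ z, hψz, hsymm _ _ (hrel z (hES hz.1))⟩
    · exact Or.inl hzG
  have hEE₁ : E =ᵐ[ν] (E ∩ S₁ : Set P) := by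
    rw [ae_eq_set, sdiff_self_inter, sdiff_eq_empty.2 inter_subset_left]
    exact ⟨hES₁, measure_empty⟩
  have himg : ψ '' E =ᵐ[ν] ψ '' (E ∩ S₁) := by
    rw [ae_eq_set, sdiff_eq_empty.2 (image_mono inter_subset_left)]
    refine ⟨measure_mono_null ?_ (hns _ (hEm.diff hS₁m) hES₁), measure_empty⟩
    rintro _ ⟨⟨z, hz, rfl⟩, hz₁⟩
    exact ⟨z, ⟨hz, fun h => hz₁ ⟨z, ⟨hz, h⟩, rfl⟩⟩, hrel z (hES hz)⟩
  rw [measure_congr himg, setLIntegral_congr hEE₁]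
  exact h S₁ _ ψ hψ₁ (fun z hz => hz.1) (image_subset_iff.2 fun z hz => hz.2.2.2)
    _ inter_subset_right (hEm.inter hS₁m)

end Holonomy

lemma exists_measurableSet_subset_of_ae {α : Type*} [MeasurableSpace α] {μ : Measure α}
    {p : α → Prop} (h : ∀ᵐ x ∂μ, p x) :
    ∃ D, MeasurableSet D ∧ D ⊆ {x | p x} ∧ ∀ᵐ x ∂μ, x ∈ D := by
  obtain ⟨t, ht, htm, ht0⟩ := exists_measurable_superset_of_null (ae_iff.1 h)
  exact ⟨tᶜ, htm.compl, fun x hx => not_not.1 fun h => hx (ht h), compl_mem_ae_iff.2 ht0⟩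

lemma Set.LeftInvOn.image_eq_inter_preimage {P Q : Type*} {π : P → Q} {D : Set P} {g : Q → P}
    (hg : LeftInvOn g π D) {F : Set Q} (hF : F ⊆ π '' D) : g '' F = D ∩ π ⁻¹' F := by
  ext x
  constructor
  · rintro ⟨y, hy, rfl⟩
    obtain ⟨x, hx, rfl⟩ := hF hy
    rw [hg hx]
    exact ⟨hx, hy⟩
  · exact fun ⟨hx, hxF⟩ => ⟨π x, hxF, hg hx⟩

section Transfer

variable {P Q : Type*} [MeasurableSpace P] [MeasurableSpace Q] {μ : Measure P} {π : P → Q}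
  {D : Set P} {RP : P → P → Prop} {RQ : Q → Q → Prop}

lemma measurableSet_image_of_subset (he : MeasurableEmbedding (D.domRestrict π)) {E : Set P}
    (hED : E ⊆ D) (hE : MeasurableSet E) : MeasurableSet (π '' E) := by
  rw [← inter_eq_left.2 hED, ← image_domRestrict]
  exact he.measurableSet_image' (measurable_subtype_coe hE)

lemma map_apply_image (hπ : Measurable π) (hμD : ∀ᵐ x ∂μ, x ∈ D)
    (he : MeasurableEmbedding (D.domRestrict π)) {E : Set P} (hED : E ⊆ D)
    (hE : MeasurableSet E) : μ.map π (π '' E) = μ E := by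
  rw [Measure.map_apply hπ (measurableSet_image_of_subset he hED hE)]
  refine measure_congr (hμD.mono fun x hx => ?_)
  exact propext ⟨fun ⟨e, heE, hex⟩ => injOn_iff_injective.2 he.injective (hED heE) hx hex ▸ heE,
    fun h => ⟨x, h, rfl⟩⟩

lemma map_compl_image_eq_zero (hπ : Measurable π) (hD : MeasurableSet D)
    (hμD : ∀ᵐ x ∂μ, x ∈ D) (he : MeasurableEmbedding (D.domRestrict π)) :
    μ.map π (π '' D)ᶜ = 0 := by
  rw [Measure.map_apply hπ (measurableSet_image_of_subset he subset_rfl hD).compl]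
  exact measure_mono_null (fun x hx h => hx ⟨x, h, rfl⟩) (ae_iff.1 hμD)

lemma lintegral_map_of_ae_mem (hπ : Measurable π) (hD : MeasurableSet D)
    (hμD : ∀ᵐ x ∂μ, x ∈ D) (he : MeasurableEmbedding (D.domRestrict π)) (f : Q → ℝ≥0∞) :
    ∫⁻ y, f y ∂μ.map π = ∫⁻ x, f (π x) ∂μ := by
  have hval := MeasurableEmbedding.subtype_coe hD
  have hμ : μ = (μ.comap ((↑) : D → P)).map (↑) := by
    rw [hval.map_comap, Subtype.range_coe, Measure.restrict_eq_self_of_ae_mem hμD]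
  rw [hμ, Measure.map_map hπ hval.measurable, hval.lintegral_map]
  exact he.lintegral_map f

lemma setLIntegral_map_of_ae_mem (hπ : Measurable π) (hD : MeasurableSet D)
    (hμD : ∀ᵐ x ∂μ, x ∈ D) (he : MeasurableEmbedding (D.domRestrict π)) (f : Q → ℝ≥0∞)
    {F : Set Q} (hF : MeasurableSet F) :
    ∫⁻ y in F, f y ∂μ.map π = ∫⁻ x in D ∩ π ⁻¹' F, f (π x) ∂μ := by
  rw [Measure.restrict_map hπ hF, lintegral_map_of_ae_mem hπ hD (ae_restrict_of_ae hμD) he,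
    Measure.restrict_congr_set]
  exact (inter_ae_eq_right_of_ae_eq_univ (ae_eq_univ.2 (ae_iff.1 hμD))).symm

lemma IsHolonomy.lift {S T : Set Q} {ψ : Q → Q} (hψ : IsHolonomy RQ S T ψ) (hπ : Measurable π)
    (hD : MeasurableSet D) (he : MeasurableEmbedding (D.domRestrict π)) {g : Q → P}
    (hg : LeftInvOn g π D) (hrel : ∀ x ∈ D, ∀ x' ∈ D, RQ (π x) (π x') → RP x x')
    (hS : S ⊆ π '' D) (hT : T ⊆ π '' D) :
    IsHolonomy RP (D ∩ π ⁻¹' S) (D ∩ π ⁻¹' T) (g ∘ ψ ∘ π) := by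
  obtain ⟨hSm, hTm, hbij, himg, hpre, hrelQ⟩ := hψ
  have hinj : InjOn π D := injOn_iff_injective.2 he.injective
  have hπS : BijOn π (D ∩ π ⁻¹' S) S := by
    convert (hinj.mono inter_subset_left).bijOn_image
    rw [image_inter_preimage, inter_eq_right.2 hS]
  have hπg : RightInvOn g π (π '' D) := hg.rightInvOn_image
  have hgT : BijOn g T (D ∩ π ⁻¹' T) := by
    rw [← hg.image_eq_inter_preimage hT]
    exact (hπg.mono hT).injOn.bijOn_image
  have hψt := hgT.comp (hbij.comp hπS)
  refine ⟨hD.inter (hπ hSm), hD.inter (hπ hTm), hψt, fun E hE hEm => ?_, fun E hE hEm => ?_,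
    fun z hz => ?_⟩
  · have hES : π '' E ⊆ S := (image_mono hE).trans hπS.mapsTo.image_subset
    rw [image_comp, image_comp, hg.image_eq_inter_preimage
      ((image_mono hES).trans (hbij.mapsTo.image_subset.trans hT))]
    exact hD.inter (hπ (himg _ hES
      (measurableSet_image_of_subset he (hE.trans inter_subset_left) hEm)))
  · have hET : π '' E ⊆ T := by
      rw [image_subset_iff]
      exact fun x hx => (hE hx).2
    convert hD.inter (hπ (hpre _ hET
      (measurableSet_image_of_subset he (hE.trans inter_subset_left) hEm))) using 1
    ext z
    simp only [mem_inter_iff, mem_preimage, comp_apply, and_assoc]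
    refine and_congr_right fun _ => and_congr_right fun hzS => ⟨fun h => ⟨_, h, ?_⟩, ?_⟩
    · exact hπg (hT (hbij.mapsTo hzS))
    · rintro ⟨e, heE, he⟩
      rwa [← he, hg (hE heE).1]
  · have hψz := hψt.mapsTo hz
    refine hrel z hz.1 _ hψz.1 ?_
    rw [comp_apply, comp_apply, hπg (hT (hbij.mapsTo hz.2))]
    exact hrelQ _ hz.2

lemma nonsingularFor_map (hπ : Measurable π) (hD : MeasurableSet D) (hμD : ∀ᵐ x ∂μ, x ∈ D)
    (he : MeasurableEmbedding (D.domRestrict π))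
    (hlift : ∀ x ∈ D, ∀ y, RQ y (π x) → ∃ x', π x' = y ∧ RP x' x)
    (hμ : NonsingularFor μ RP) : NonsingularFor (μ.map π) RQ := by
  intro S hS hS0
  rw [Measure.map_apply hπ hS] at hS0
  obtain ⟨N, hN, hNm, hN0⟩ := exists_measurable_superset_of_null (hμ _ (hπ hS) hS0)
  refine measure_mono_null (t := (π '' D)ᶜ ∪ π '' (D ∩ N)) ?_
    (measure_union_null (map_compl_image_eq_zero hπ hD hμD he) ?_)
  · rintro y ⟨s, hs, hsy⟩
    by_cases hy : y ∈ π '' D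
    · obtain ⟨x, hx, rfl⟩ := hy
      obtain ⟨x', rfl, hx'⟩ := hlift x hx s hsy
      exact Or.inr ⟨x, ⟨hx, hN ⟨x', hs, hx'⟩⟩, rfl⟩
    · exact Or.inl hy
  · rw [map_apply_image hπ hμD he inter_subset_left (hD.inter hNm)]
    exact measure_mono_null inter_subset_right hN0

lemma isGibbsMeasure_map (hπ : Measurable π) (hD : MeasurableSet D) (hμD : ∀ᵐ x ∂μ, x ∈ D)
    (he : MeasurableEmbedding (D.domRestrict π)) {g : Q → P} (hg : LeftInvOn g π D)
    (hsymm : ∀ y y', RQ y y' → RQ y' y)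
    (hrel : ∀ x ∈ D, ∀ x' ∈ D, RQ (π x) (π x') → RP x x') (hns : NonsingularFor (μ.map π) RQ)
    {φ : P → P → ℝ} (hμ : IsGibbsMeasure μ RP φ) :
    IsGibbsMeasure (μ.map π) RQ fun y y' => φ (g y) (g y') := by
  refine isGibbsMeasure_of_subset_conull hns hsymm (measurableSet_image_of_subset he subset_rfl hD)
    (map_compl_image_eq_zero hπ hD hμD he) fun S T ψ hψ hS hT E hES hE => ?_
  have hψt := hψ.lift hπ hD he hg hrel hS hT
  have hEt : MeasurableSet (D ∩ π ⁻¹' E) := hD.inter (hπ hE)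
  have hEtS : D ∩ π ⁻¹' E ⊆ D ∩ π ⁻¹' S := inter_subset_inter_right _ (preimage_mono hES)
  have himg : π '' ((g ∘ ψ ∘ π) '' (D ∩ π ⁻¹' E)) = ψ '' E := by
    rw [← image_comp, image_congr (g := ψ ∘ π) fun z hz => ?_, image_comp, image_inter_preimage,
      inter_eq_right.2 (hES.trans hS)]
    exact hg.rightInvOn_image (hT (hψ.2.2.1.mapsTo (hES hz.2)))
  calc μ.map π (ψ '' E)
      = μ ((g ∘ ψ ∘ π) '' (D ∩ π ⁻¹' E)) := by
        rw [← himg, map_apply_image hπ hμD he ((image_mono hEtS).trans hψt.2.2.1.image_eq.subset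
          |>.trans inter_subset_left) (hψt.2.2.2.1 _ hEtS hEt)]
    _ = ∫⁻ z in D ∩ π ⁻¹' E, ENNReal.ofReal (Real.exp (φ z (g (ψ (π z))))) ∂μ :=
        hμ _ _ _ hψt _ hEtS hEt
    _ = ∫⁻ z in D ∩ π ⁻¹' E, ENNReal.ofReal (Real.exp (φ (g (π z)) (g (ψ (π z))))) ∂μ :=
        setLIntegral_congr_fun hEt fun z hz => by rw [hg hz.1]
    _ = _ := (setLIntegral_map_of_ae_mem hπ hD hμD he
          (fun y => ENNReal.ofReal (Real.exp (φ (g y) (g (ψ y))))) hE).symm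

end Transfer

section Recurrence

open Filter

lemma Ergodic.ae_frequently_mem {α : Type*} [MeasurableSpace α] {f : α → α} {μ : Measure α}
    [IsFiniteMeasure μ] (hf : Ergodic f μ) {s : Set α} (hs : MeasurableSet s) (h0 : μ s ≠ 0) :
    ∀ᵐ x ∂μ, ∃ᶠ n in atTop, f^[n] x ∈ s := by
  set U := ⋃ n, f^[n] ⁻¹' s
  have hU : MeasurableSet U := MeasurableSet.iUnion fun n => hf.measurable.iterate n hs
  have hfU : f ⁻¹' U ⊆ U := fun x hx => by
    obtain ⟨n, hn⟩ := mem_iUnion.1 hx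
    exact mem_iUnion.2 ⟨n + 1, by rwa [mem_preimage, iterate_succ_apply]⟩
  have hUae : ∀ᵐ x ∂μ, x ∈ U := by
    refine ((hf.ae_empty_or_univ_of_preimage_ae_le hU.nullMeasurableSet
      hfU.eventuallyLE).resolve_left fun h => h0 ?_).mem_iff.mono fun x hx => hx.2 trivial
    exact measure_mono_null (subset_iUnion (fun n => f^[n] ⁻¹' s) 0) (ae_eq_empty.1 h)
  have hshift : ∀ N, ∀ᵐ x ∂μ, f^[N] x ∈ U := fun N =>
    ((hf.toMeasurePreserving.iterate N).quasiMeasurePreserving.ae hUae)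
  filter_upwards [ae_all_iff.2 hshift] with x hx
  refine frequently_atTop.2 fun N => ?_
  obtain ⟨n, hn⟩ := mem_iUnion.1 (hx N)
  exact ⟨n + N, le_add_self, by rwa [iterate_add_apply]⟩

end Recurrence

section SlidingBlockCode

variable {A B : Type*}

lemma shiftZ_shiftZ (a b : ℤ) (x : ℤ → A) : shiftZ a (shiftZ b x) = shiftZ (a + b) x := by
  funext n
  simp only [shiftZ, add_assoc]

lemma shiftZ_zero (x : ℤ → A) : shiftZ 0 x = x := by
  funext n
  simp only [shiftZ, add_zero]

lemma map_shiftZ {X : Set (ℤ → A)} {π : (ℤ → A) → (ℤ → B)}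
    (hX : ∀ k : ℤ, ∀ x ∈ X, shiftZ k x ∈ X) (hequiv : ∀ x ∈ X, π (shiftZ 1 x) = shiftZ 1 (π x))
    (k : ℤ) {x : ℤ → A} (hx : x ∈ X) : π (shiftZ k x) = shiftZ k (π x) := by
  induction k using Int.induction_on with
  | zero => rw [shiftZ_zero, shiftZ_zero]
  | succ k ih => rw [add_comm, ← shiftZ_shiftZ, hequiv _ (hX k x hx), ih, shiftZ_shiftZ]
  | pred k ih =>
    have h := hequiv _ (hX (-k - 1) x hx)
    rw [shiftZ_shiftZ, add_sub_cancel, ih] at h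
    rw [← shiftZ_zero (π (shiftZ _ x)), ← neg_add_cancel (1 : ℤ), ← shiftZ_shiftZ, ← h,
      shiftZ_shiftZ]
    congr 1
    ring

def IsSlidingBlockCode (X : Set (ℤ → A)) (π : (ℤ → A) → (ℤ → B)) (m : ℕ) : Prop :=
  ∀ x ∈ X, ∀ x' ∈ X, ∀ k k' : ℤ, (∀ j : ℤ, |j| ≤ m → x (k + j) = x' (k' + j)) → π x k = π x' k'

lemma exists_radius_of_isCompact {Z C : Type*} [TopologicalSpace Z] [TopologicalSpace C]
    [DiscreteTopology C] {K : Set Z} (hK : IsCompact K) {F F' : Z → ℤ → C} (hF : Continuous F)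
    (hF' : Continuous F') {U : Set Z} (hU : IsOpen U) (h : ∀ z ∈ K, F z = F' z → z ∈ U) :
    ∃ L : ℕ, ∀ z ∈ K, (∀ j : ℤ, |j| ≤ L → F z j = F' z j) → z ∈ U := by
  set W : ℕ → Set Z := fun L => U ∪ ⋃ (j : ℤ) (_ : |j| ≤ L), {z | F z j ≠ F' z j}
  have hW : ∀ L, IsOpen (W L) := fun L => hU.union <| isOpen_iUnion fun j => isOpen_iUnion fun _ =>
    isOpen_ne_fun ((continuous_apply j).comp hF) ((continuous_apply j).comp hF')
  have hmono : Monotone W := fun L L' hLL' => union_subset_union_right _ <|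
    biUnion_mono (fun j (hj : |j| ≤ L) => hj.trans (by exact_mod_cast hLL')) fun _ _ => subset_rfl
  have hcover : K ⊆ ⋃ L, W L := by
    intro z hz
    by_cases hFz : F z = F' z
    · exact mem_iUnion.2 ⟨0, Or.inl (h z hz hFz)⟩
    · obtain ⟨j, hj⟩ := Function.ne_iff.1 hFz
      exact mem_iUnion.2 ⟨j.natAbs, Or.inr (mem_iUnion₂.2 ⟨j, (Int.abs_eq_natAbs j).le, hj⟩)⟩
  obtain ⟨L, hL⟩ := hK.elim_directed_cover W hW hcover hmono.directed_le
  refine ⟨L, fun z hz hagree => (hL hz).resolve_right ?_⟩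
  simp only [mem_iUnion, not_exists]
  exact fun j hj hne => hne (hagree j hj)

variable [TopologicalSpace A] [DiscreteTopology A] [TopologicalSpace B] [DiscreteTopology B]

lemma exists_radius_apply_zero [Finite A] {π : (ℤ → A) → (ℤ → B)} (hπ : Continuous π) :
    ∃ m : ℕ, ∀ x x' : ℤ → A, (∀ j : ℤ, |j| ≤ m → x j = x' j) → π x 0 = π x' 0 := by
  have hU : IsOpen {p : (ℤ → A) × (ℤ → A) | π p.1 0 = π p.2 0} :=
    (isOpen_discrete {q : B × B | q.1 = q.2}).preimage <|
      ((continuous_apply 0).comp (hπ.comp continuous_fst)).prodMk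
        ((continuous_apply 0).comp (hπ.comp continuous_snd))
  obtain ⟨m, hm⟩ := exists_radius_of_isCompact isCompact_univ continuous_fst continuous_snd hU
    fun p _ hp => congrArg (fun x => π x 0) hp
  exact ⟨m, fun x x' h => hm (x, x') trivial h⟩

lemma exists_isSlidingBlockCode [Finite A] {X : Set (ℤ → A)} {π : (ℤ → A) → (ℤ → B)}
    (hX : ∀ k : ℤ, ∀ x ∈ X, shiftZ k x ∈ X) (hπ : Continuous π)
    (hequiv : ∀ x ∈ X, π (shiftZ 1 x) = shiftZ 1 (π x)) : ∃ m, IsSlidingBlockCode X π m := by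
  obtain ⟨m, hm⟩ := exists_radius_apply_zero hπ
  refine ⟨m, fun x hx x' hx' k k' h => ?_⟩
  have := hm (shiftZ k x) (shiftZ k' x') fun j hj => by simpa only [shiftZ, add_comm] using h j hj
  rwa [map_shiftZ hX hequiv k hx, map_shiftZ hX hequiv k' hx', shiftZ, shiftZ, zero_add,
    zero_add] at this

end SlidingBlockCode

section DoublyTransitive

variable {A B : Type*}

def blockWord (x : ℤ → A) (a : ℤ) (n : ℕ) : List A := List.ofFn fun s : Fin n => x (a + s)

lemma blockWord_get (x : ℤ → A) (a : ℤ) (n : ℕ) (s : Fin (blockWord x a n).length) :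
    (blockWord x a n).get s = x (a + s) := by
  revert s
  unfold blockWord
  intro s
  rw [List.get_ofFn]
  rfl

lemma length_blockWord (x : ℤ → A) (a : ℤ) (n : ℕ) : (blockWord x a n).length = n :=
  List.length_ofFn

lemma occursAt_blockWord_iff {x y : ℤ → A} {a i : ℤ} {n : ℕ} :
    occursAt y (blockWord x a n) i ↔ ∀ s : ℕ, s < n → y (i + s) = x (a + s) := by
  refine ⟨fun h s hs => ?_, fun h s => ?_⟩
  · have := h ⟨s, by rwa [length_blockWord]⟩
    rwa [blockWord_get] at this
  · rw [blockWord_get]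
    exact h s (by simpa only [length_blockWord] using s.2)

lemma inLanguage_blockWord {X : Set (ℤ → A)} {x : ℤ → A} (hx : x ∈ X) (a : ℤ) (n : ℕ) :
    InLanguage X (blockWord x a n) :=
  ⟨x, hx, a, occursAt_blockWord_iff.2 fun _ _ => rfl⟩

lemma DoublyTransitive.exists_block_ge {Y : Set (ℤ → A)} {y y₀ : ℤ → A}
    (hdt : DoublyTransitive Y y) (hy₀ : y₀ ∈ Y) (L : ℕ) (M : ℤ) :
    ∃ c, M ≤ c ∧ ∀ j : ℤ, |j| ≤ L → y (c + j) = y₀ j := by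
  obtain ⟨i, hi, hocc⟩ := (hdt _ (inLanguage_blockWord hy₀ (-L) (2 * L + 1))).1 M
  refine ⟨i + L, by omega, fun j hj => ?_⟩
  have := occursAt_blockWord_iff.1 hocc (j + L).toNat (by rw [abs_le] at hj; omega)
  rwa [Int.toNat_of_nonneg (by rw [abs_le] at hj; omega), show i + (j + L) = i + L + j by ring,
    show -(L : ℤ) + (j + L) = j by ring] at this

lemma DoublyTransitive.exists_block_le {Y : Set (ℤ → A)} {y y₀ : ℤ → A}
    (hdt : DoublyTransitive Y y) (hy₀ : y₀ ∈ Y) (L : ℕ) (M : ℤ) :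
    ∃ c, c ≤ M ∧ ∀ j : ℤ, |j| ≤ L → y (c + j) = y₀ j := by
  obtain ⟨i, hi, hocc⟩ := (hdt _ (inLanguage_blockWord hy₀ (-L) (2 * L + 1))).2 (M - L)
  refine ⟨i + L, by omega, fun j hj => ?_⟩
  have := occursAt_blockWord_iff.1 hocc (j + L).toNat (by rw [abs_le] at hj; omega)
  rwa [Int.toNat_of_nonneg (by rw [abs_le] at hj; omega), show i + (j + L) = i + L + j by ring,
    show -(L : ℤ) + (j + L) = j by ring] at this

lemma DoublyTransitive.of_gibbsRel {Y : Set (ℤ → A)} {y y' : ℤ → A} (hdt : DoublyTransitive Y y)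
    (h : GibbsRel Y y y') : DoublyTransitive Y y' := by
  obtain ⟨-, -, N, hN⟩ := h
  intro w hw
  refine ⟨fun M => ?_, fun M => ?_⟩
  · obtain ⟨i, hi, hocc⟩ := (hdt w hw).1 (max M (N + 1))
    refine ⟨i, le_of_max_le_left hi, fun s => ?_⟩
    rw [← hocc s, hN _ ((show N < i + s by omega).trans_le (le_abs_self _))]
  · obtain ⟨i, hi, hocc⟩ := (hdt w hw).2 (min M (-N - 1 - w.length))
    refine ⟨i, hi.trans (min_le_left _ _), fun s => ?_⟩
    have := s.2
    rw [← hocc s, hN _ ((show N < -(i + s) by omega).trans_le (neg_le_abs _))]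

lemma DoublyTransitive.map {X : Set (ℤ → A)} {Y : Set (ℤ → B)} {π : (ℤ → A) → (ℤ → B)} {m : ℕ}
    (hm : IsSlidingBlockCode X π m) (hY : Y ⊆ π '' X) {x : ℤ → A} (hx : x ∈ X)
    (hdt : DoublyTransitive X x) : DoublyTransitive Y (π x) := by
  rintro w ⟨y, hy, i, hi⟩
  obtain ⟨x₁, hx₁, rfl⟩ := hY hy
  have hshift : ∀ j, occursAt x (blockWord x₁ (i - m) (w.length + 2 * m)) j →
      occursAt (π x) w (j + m) := by
    intro j hj l
    rw [← hi l]
    refine hm x hx x₁ hx₁ _ _ fun t ht => ?_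
    rw [abs_le] at ht
    have := occursAt_blockWord_iff.1 hj (m + l + t).toNat (by have := l.2; omega)
    rwa [Int.toNat_of_nonneg (by omega), show j + (m + l + t : ℤ) = j + m + l + t by ring,
      show i - m + (m + l + t : ℤ) = i + l + t by ring] at this
  obtain ⟨hr, hl⟩ := hdt _ (inLanguage_blockWord hx₁ (i - m) (w.length + 2 * m))
  refine ⟨fun N => ?_, fun N => ?_⟩
  · obtain ⟨j, hj, hocc⟩ := hr (N - m)
    exact ⟨j + m, by omega, hshift j hocc⟩
  · obtain ⟨j, hj, hocc⟩ := hl (N - m)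
    exact ⟨j + m, by omega, hshift j hocc⟩

lemma GibbsRel.symm {X : Set (ℤ → A)} {x y : ℤ → A} (h : GibbsRel X x y) :
    GibbsRel X y x :=
  let ⟨hx, hy, N, hN⟩ := h
  ⟨hy, hx, N, fun n hn => (hN n hn).symm⟩

lemma gibbsRel_of_forall_le_of_forall_lt {X : Set (ℤ → A)} {x x' : ℤ → A} (hx : x ∈ X)
    (hx' : x' ∈ X) {c₀ c₁ : ℤ} (h₀ : ∀ k, c₀ ≤ k → x k = x' k) (h₁ : ∀ k, k < c₁ → x k = x' k) :
    GibbsRel X x x' := by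
  refine ⟨hx, hx', max |c₀| |c₁|, fun k hk => ?_⟩
  have := max_lt_iff.1 hk
  have := le_abs_self c₀
  have := neg_abs_le c₁
  rcases abs_cases k with ⟨hk', _⟩ | ⟨hk', _⟩
  · exact h₀ k (by omega)
  · exact h₁ k (by omega)

end DoublyTransitive

section TailLift

variable {A B : Type*}

def splice (c : ℤ) (x x' : ℤ → A) : ℤ → A := fun p => if p < c then x p else x' p

lemma splice_mem {n : ℕ} {F : Finset (List A)} {X : Set (ℤ → A)}
    (hX : X = {x | ∀ i : ℤ, (List.ofFn fun j : Fin n => x (i + (j.1 : ℤ))) ∉ F})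
    {x x' : ℤ → A} (hx : x ∈ X) (hx' : x' ∈ X) {c : ℤ}
    (h : ∀ p, c - n ≤ p → p < c → x p = x' p) : splice c x x' ∈ X := by
  rw [hX] at hx hx' ⊢
  intro i
  by_cases hi : i + n ≤ c
  · convert hx i using 3
    funext j
    exact if_pos (by omega)
  · convert hx' i using 3
    funext j
    unfold splice
    split_ifs with hp
    · exact h _ (by omega) hp
    · rfl

lemma IsSlidingBlockCode.map_splice {X : Set (ℤ → A)} {π : (ℤ → A) → (ℤ → B)} {m : ℕ}
    (hm : IsSlidingBlockCode X π m) {x x' : ℤ → A} (hx : x ∈ X) (hx' : x' ∈ X) {c : ℤ}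
    (hz : splice c x x' ∈ X) (h : ∀ p, c - m ≤ p → p < c + m → x p = x' p) :
    π (splice c x x') = splice c (π x) (π x') := by
  funext k
  by_cases hk : k < c
  · rw [show splice c (π x) (π x') k = π x k from if_pos hk]
    refine hm _ hz _ hx k k fun j hj => ?_
    rw [abs_le] at hj
    unfold splice
    split_ifs with hp
    · rfl
    · exact (h _ (by omega) (by omega)).symm
  · rw [show splice c (π x) (π x') k = π x' k from if_neg hk]
    refine hm _ hz _ hx' k k fun j hj => ?_
    rw [abs_le] at hj
    unfold splice
    split_ifs with hp
    · exact h _ (by omega) (by omega)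
    · rfl

/-- Splicing `x` and `x'` inside the window of agreement gives a point of the SFT `X` over
`π x'`, which must be `x'`. -/
lemma eq_of_map_eq_of_splice {n : ℕ} {F : Finset (List A)} {X : Set (ℤ → A)}
    (hX : X = {x | ∀ i : ℤ, (List.ofFn fun j : Fin n => x (i + (j.1 : ℤ))) ∉ F})
    {π : (ℤ → A) → (ℤ → B)} {m : ℕ} (hm : IsSlidingBlockCode X π m) {x x' : ℤ → A}
    (hx : x ∈ X) (hx' : x' ∈ X) (huniq : ∀ z ∈ X, π z = π x' → z = x') (c : ℤ)
    (hagree : ∀ p, c - (n + m) ≤ p → p < c + (n + m) → x p = x' p) :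
    ((∀ k, c ≤ k → π x k = π x' k) → ∀ k, c ≤ k → x k = x' k) ∧
    ((∀ k, k < c → π x k = π x' k) → ∀ k, k < c → x k = x' k) := by
  have hagree' : ∀ p, c - (n + m) ≤ p → p < c + (n + m) → x' p = x p :=
    fun p h₁ h₂ => (hagree p h₁ h₂).symm
  constructor
  · intro hπ k hk
    have hz := splice_mem hX hx' hx (c := c) fun p h₁ h₂ => hagree' p (by omega) (by omega)
    have hzx' := huniq _ hz <| by
      rw [hm.map_splice hx' hx hz fun p h₁ h₂ => hagree' p (by omega) (by omega)]
      funext j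
      unfold splice
      split_ifs with hj
      · rfl
      · exact hπ j (not_lt.1 hj)
    rw [← hzx']
    exact (if_neg (not_lt.2 hk)).symm
  · intro hπ k hk
    have hz := splice_mem hX hx hx' (c := c) fun p h₁ h₂ => hagree p (by omega) (by omega)
    have hzx' := huniq _ hz <| by
      rw [hm.map_splice hx hx' hz fun p h₁ h₂ => hagree p (by omega) (by omega)]
      funext j
      unfold splice
      split_ifs with hj
      · exact hπ j hj
      · rfl
    rw [← hzx']
    exact (if_pos hk).symm

variable [TopologicalSpace A] [DiscreteTopology A] [TopologicalSpace B]
  [DiscreteTopology B] {X : Set (ℤ → A)} {π : (ℤ → A) → (ℤ → B)}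

lemma exists_radius_eq_of_unique [Finite A] (hX : IsShiftSpace X) (hπ : Continuous π)
    (hequiv : ∀ x ∈ X, π (shiftZ 1 x) = shiftZ 1 (π x)) {x₀ : ℤ → A}
    (huniq : ∀ z ∈ X, π z = π x₀ → z = x₀) (r : ℕ) :
    ∃ L : ℕ, ∀ z ∈ X, ∀ c : ℤ, (∀ j : ℤ, |j| ≤ L → π z (c + j) = π x₀ j) →
      ∀ j : ℤ, |j| ≤ r → z (c + j) = x₀ j := by
  have hfin : {j : ℤ | |j| ≤ r}.Finite := (finite_Icc (-(r : ℤ)) r).subset fun j hj => abs_le.1 hj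
  -- Otherwise a limit of counterexamples would be a second preimage of `π x₀`.
  obtain ⟨L, hL⟩ := exists_radius_of_isCompact hX.1.isCompact hπ continuous_const
    (isOpen_set_pi hfin fun j _ => isOpen_discrete {x₀ j}) fun z hz h => by
      rw [huniq z hz h]
      exact fun _ _ => rfl
  refine ⟨L, fun z hz c h j hj => ?_⟩
  have := hL (shiftZ c z) (hX.2 c z hz) (fun j hj => ?_) j hj
  · rwa [shiftZ, add_comm] at this
  · rw [map_shiftZ hX.2 hequiv c hz, shiftZ, add_comm]
    exact h j hj

lemma gibbsRel_of_gibbsRel_map [Finite A] {Y : Set (ℤ → B)} {n : ℕ} {F : Finset (List A)}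
    (hX : IsShiftSpace X)
    (hXF : X = {x | ∀ i : ℤ, (List.ofFn fun j : Fin n => x (i + (j.1 : ℤ))) ∉ F})
    (hπ : Continuous π) (hequiv : ∀ x ∈ X, π (shiftZ 1 x) = shiftZ 1 (π x))
    (huniq : ∀ z ∈ X, ∀ x ∈ X, DoublyTransitive Y (π x) → π z = π x → z = x)
    {x x' : ℤ → A} (hx : x ∈ X) (hx' : x' ∈ X) (hdt : DoublyTransitive Y (π x))
    (h : GibbsRel Y (π x) (π x')) : GibbsRel X x x' := by
  have hdt' := hdt.of_gibbsRel h
  obtain ⟨hxY, -, N, hN⟩ := h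
  obtain ⟨m, hm⟩ := exists_isSlidingBlockCode hX.2 hπ hequiv
  obtain ⟨L, hL⟩ := exists_radius_eq_of_unique hX hπ hequiv
    (fun z hz => huniq z hz x hx hdt) (n + m)
  have hfar : ∀ p, N < p ∨ p < -N → N < |p| := fun p hp => hp.elim
    (fun h => h.trans_le (le_abs_self p)) fun h => (by omega : N < -p).trans_le (neg_le_abs p)
  have hagree : ∀ c, (∀ j : ℤ, |j| ≤ L → N < |c + j| ∧ π x (c + j) = π x j) →
      ∀ p, c - (n + m) ≤ p → p < c + (n + m) → x p = x' p := by
    intro c hc p h₁ h₂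
    have hp : |p - c| ≤ ((n + m : ℕ) : ℤ) := by
      rw [abs_le]
      push_cast
      omega
    have e := hL x hx c (fun j hj => (hc j hj).2) _ hp
    have e' := hL x' hx' c (fun j hj => (hN _ (hc j hj).1).symm.trans (hc j hj).2) _ hp
    rw [add_sub_cancel] at e e'
    rw [e, e']
  have hsplice := eq_of_map_eq_of_splice hXF hm hx hx' fun z hz => huniq z hz x' hx' hdt'
  obtain ⟨c₀, hc₀, hb₀⟩ := hdt.exists_block_ge hxY L (N + L + 1)
  obtain ⟨c₁, hc₁, hb₁⟩ := hdt.exists_block_le hxY L (-N - L - 1)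
  have hright := (hsplice c₀ <| hagree c₀ fun j hj =>
    ⟨hfar _ (Or.inl (by rw [abs_le] at hj; omega)), hb₀ j hj⟩).1
      fun k hk => hN k (hfar k (Or.inl (by omega)))
  have hleft := (hsplice c₁ <| hagree c₁ fun j hj =>
    ⟨hfar _ (Or.inr (by rw [abs_le] at hj; omega)), hb₁ j hj⟩).2
      fun k hk => hN k (hfar k (Or.inr (by omega)))
  exact gibbsRel_of_forall_le_of_forall_lt hx hx' hright hleft

lemma exists_gibbsRel_of_gibbsRel_map [Finite A] {Y : Set (ℤ → B)} {n : ℕ}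
    {F : Finset (List A)} (hX : IsShiftSpace X)
    (hXF : X = {x | ∀ i : ℤ, (List.ofFn fun j : Fin n => x (i + (j.1 : ℤ))) ∉ F})
    (hπ : Continuous π) (hequiv : ∀ x ∈ X, π (shiftZ 1 x) = shiftZ 1 (π x))
    (huniq : ∀ z ∈ X, ∀ x ∈ X, DoublyTransitive Y (π x) → π z = π x → z = x)
    (hY : Y ⊆ π '' X) {x : ℤ → A} (hx : x ∈ X) (hdt : DoublyTransitive Y (π x)) {y : ℤ → B}
    (h : GibbsRel Y y (π x)) : ∃ x', π x' = y ∧ GibbsRel X x' x := by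
  obtain ⟨x', hx', rfl⟩ := hY h.1
  exact ⟨x', rfl, gibbsRel_of_gibbsRel_map hX hXF hπ hequiv huniq hx' hx (hdt.of_gibbsRel h.symm) h⟩

end TailLift

section ShiftRecurrence

variable {A : Type*}

lemma iterate_shiftZ (k : ℤ) (n : ℕ) (x : ℤ → A) : (shiftZ k)^[n] x = shiftZ (n * k) x := by
  induction n with
  | zero => simp [shiftZ_zero]
  | succ n ih =>
    rw [iterate_succ_apply', ih, shiftZ_shiftZ]
    congr 1
    push_cast
    ring

lemma occursAt_shiftZ {x : ℤ → A} {w : List A} {i k : ℤ} :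
    occursAt (shiftZ k x) w i ↔ occursAt x w (i + k) := by
  simp only [occursAt, shiftZ, add_right_comm]

lemma isOpen_setOf_occursAt [TopologicalSpace A] [DiscreteTopology A] (w : List A) (i : ℤ) :
    IsOpen {x : ℤ → A | occursAt x w i} := by
  have : {x : ℤ → A | occursAt x w i} =
      ⋂ j : Fin w.length, (fun x => x (i + j)) ⁻¹' {w.get j} := by
    ext x
    simp [occursAt]
  rw [this]
  exact isOpen_iInter_of_finite fun j => (isOpen_discrete _).preimage (continuous_apply _)

def shiftEquiv (A : Type*) [MeasurableSpace A] : (ℤ → A) ≃ᵐ (ℤ → A) where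
  toFun := shiftZ 1
  invFun := shiftZ (-1)
  left_inv x := by simp only [shiftZ_shiftZ, neg_add_cancel, shiftZ_zero]
  right_inv x := by simp only [shiftZ_shiftZ, add_neg_cancel, shiftZ_zero]
  measurable_toFun := measurable_pi_lambda _ fun _ => measurable_pi_apply _
  measurable_invFun := measurable_pi_lambda _ fun _ => measurable_pi_apply _

lemma ae_doublyTransitive [TopologicalSpace A] [DiscreteTopology A] [Finite A]
    [MeasurableSpace A] [BorelSpace A] {X : Set (ℤ → A)}
    (hX : ∀ k : ℤ, ∀ x ∈ X, shiftZ k x ∈ X) {μ : Measure (ℤ → A)} [IsFiniteMeasure μ]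
    (herg : Ergodic (shiftZ 1) μ) (hsupp : FullSupportOn μ X) :
    ∀ᵐ x ∂μ, DoublyTransitive X x := by
  refine ae_all_iff.2 fun w => ?_
  by_cases hw : InLanguage X w
  swap
  · exact Filter.Eventually.of_forall fun x h => absurd h hw
  set C := {x : ℤ → A | occursAt x w 0}
  have hCm : MeasurableSet C := (isOpen_setOf_occursAt w 0).measurableSet
  have hC0 : μ C ≠ 0 := by
    obtain ⟨x₀, hx₀, i, hi⟩ := hw
    refine (hsupp C (isOpen_setOf_occursAt w 0) ⟨shiftZ i x₀, ?_, hX i x₀ hx₀⟩).ne'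
    exact occursAt_shiftZ.2 (by rwa [zero_add])
  have herg' : Ergodic (shiftEquiv A) μ := herg
  filter_upwards [herg'.ae_frequently_mem hCm hC0, herg'.symm.ae_frequently_mem hCm hC0]
    with x hfwd hbwd _
  refine ⟨fun N => ?_, fun N => ?_⟩
  · obtain ⟨n, hn, hx⟩ := Filter.frequently_atTop.1 hfwd N.toNat
    refine ⟨n, by omega, ?_⟩
    have : occursAt ((shiftZ 1)^[n] x) w 0 := hx
    rwa [iterate_shiftZ, occursAt_shiftZ, zero_add, mul_one] at this
  · obtain ⟨n, hn, hx⟩ := Filter.frequently_atTop.1 hbwd (-N).toNat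
    refine ⟨-n, by omega, ?_⟩
    have : occursAt ((shiftZ (-1))^[n] x) w 0 := hx
    rwa [iterate_shiftZ, occursAt_shiftZ, zero_add, mul_neg_one] at this

end ShiftRecurrence

theorem stmt18_general {A B : Type*} [Fintype A] [TopologicalSpace A] [DiscreteTopology A]
    [MeasurableSpace A] [BorelSpace A]
    [Fintype B] [TopologicalSpace B] [DiscreteTopology B]
    [MeasurableSpace B] [BorelSpace B]
    (X : Set (ℤ → A)) (hX : IsShiftSpace X) (hSFT : IsSFT X)
    (Y : Set (ℤ → B))
    (π : (ℤ → A) → (ℤ → B)) (hcont : Continuous π)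
    (hequiv : ∀ x ∈ X, π (shiftZ 1 x) = shiftZ 1 (π x))
    (hsurj : π '' X = Y)
    (hai : ∀ y ∈ Y, DoublyTransitive Y y → ∃! x, x ∈ X ∧ π x = y)
    (μ : Measure (ℤ → A)) (hμprob : IsProbabilityMeasure μ) (hμconc : μ X = 1)
    (hμerg : Ergodic (shiftZ 1) μ) (hμsupp : FullSupportOn μ X)
    (hμns : NonsingularFor μ (GibbsRel X)) :
    NonsingularFor (μ.map π) (GibbsRel Y) ∧
    ∀ φ : (ℤ → A) → (ℤ → A) → ℝ,
      (∀ x y z : ℤ → A, GibbsRel X x y → GibbsRel X y z → φ x y + φ y z = φ x z) →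
      IsGibbsMeasure μ (GibbsRel X) φ →
      ∃ φ' : (ℤ → B) → (ℤ → B) → ℝ,
        (∀ x x' : ℤ → A, x ∈ X → x' ∈ X → DoublyTransitive X x → DoublyTransitive X x' →
          GibbsRel X x x' → φ' (π x) (π x') = φ x x') ∧
        IsGibbsMeasure (μ.map π) (GibbsRel Y) φ' := by
  obtain ⟨n, F, hXF⟩ := hSFT
  obtain ⟨m, hm⟩ := exists_isSlidingBlockCode hX.2 hcont hequiv
  have hY : Y ⊆ π '' X := hsurj.symm.subset
  have huniq : ∀ z ∈ X, ∀ x ∈ X, DoublyTransitive Y (π x) → π z = π x → z = x :=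
    fun z hz x hx hdt h => (hai _ (hsurj ▸ mem_image_of_mem π hx) hdt).unique ⟨hz, h⟩ ⟨hx, rfl⟩
  set DT := {x | x ∈ X ∧ DoublyTransitive X x}
  have hdtY : ∀ x ∈ DT, DoublyTransitive Y (π x) := fun x hx => hx.2.map hm hY hx.1
  have hinj : InjOn π DT := fun x hx x' hx' => huniq x hx.1 x' hx'.1 (hdtY x' hx')
  obtain ⟨D, hD, hDX, hμD⟩ := exists_measurableSet_subset_of_ae <|
    (show ∀ᵐ x ∂μ, x ∈ X from (mem_ae_iff_prob_eq_one hX.1.measurableSet).2 hμconc).and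
      (ae_doublyTransitive hX.2 hμerg hμsupp)
  have : PolishSpace A := inferInstance
  have he : MeasurableEmbedding (D.domRestrict π) :=
    hcont.continuousOn.measurableEmbedding hD (hinj.mono hDX)
  have hrel : ∀ x ∈ D, ∀ x' ∈ D, GibbsRel Y (π x) (π x') → GibbsRel X x x' :=
    fun x hx x' hx' => gibbsRel_of_gibbsRel_map hX hXF hcont hequiv huniq (hDX hx).1 (hDX hx').1
      (hdtY x (hDX hx))
  have hns := nonsingularFor_map hcont.measurable hD hμD he (fun x hx _ =>
    exists_gibbsRel_of_gibbsRel_map hX hXF hcont hequiv huniq hY (hDX hx).1 (hdtY x (hDX hx))) hμns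
  have : Nonempty (ℤ → A) := ⟨(nonempty_of_measure_ne_zero (hμconc ▸ one_ne_zero)).some⟩
  have hg := hinj.leftInvOn_invFunOn
  refine ⟨hns, fun φ _ hφ => ⟨_, fun x x' hx hx' hdt hdt' _ => ?_,
    isGibbsMeasure_map hcont.measurable hD hμD he (hg.mono hDX) (fun _ _ h => h.symm) hrel hns hφ⟩⟩
  rw [hg ⟨hx, hdt⟩, hg ⟨hx', hdt'⟩]

/-- preservation of Gibbsianness under almost invertible factor codes:
let `π` be an almost invertible factor code from an irreducible SFT `X` onto a sofic
shift `Y`, and let `μ` be fully supported, shift-invariant, ergodic, and nonsingular for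
the Gibbs relation of `X`. Then `ν = π_* μ` is nonsingular for the Gibbs relation of `Y`;
moreover if `μ` is Gibbs for an additive cocycle `φ`, then `ν` is Gibbs for the cocycle
`φ ∘ (π⁻¹ × π⁻¹)`, i.e. for some cocycle `φ'` agreeing with `φ` through `π⁻¹` on the
(full-measure set of) doubly transitive points. -/
theorem stmt18 {A B : Type*} [Fintype A] [TopologicalSpace A] [DiscreteTopology A]
    [MeasurableSpace A] [BorelSpace A]
    [Fintype B] [TopologicalSpace B] [DiscreteTopology B]
    [MeasurableSpace B] [BorelSpace B]
    (X : Set (ℤ → A)) (hX : IsShiftSpace X) (hSFT : IsSFT X) (hXirr : IrreducibleShift X)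
    (Y : Set (ℤ → B)) (hY : IsShiftSpace Y)
    (π : (ℤ → A) → (ℤ → B)) (hcont : Continuous π)
    (hequiv : ∀ x ∈ X, π (shiftZ 1 x) = shiftZ 1 (π x))
    (hsurj : π '' X = Y)
    (hai : ∀ y ∈ Y, DoublyTransitive Y y → ∃! x, x ∈ X ∧ π x = y)
    (μ : Measure (ℤ → A)) (hμprob : IsProbabilityMeasure μ) (hμconc : μ X = 1)
    (hμerg : Ergodic (shiftZ 1) μ) (hμsupp : FullSupportOn μ X)
    (hμns : NonsingularFor μ (GibbsRel X)) :
    NonsingularFor (μ.map π) (GibbsRel Y) ∧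
    ∀ φ : (ℤ → A) → (ℤ → A) → ℝ,
      (∀ x y z : ℤ → A, GibbsRel X x y → GibbsRel X y z → φ x y + φ y z = φ x z) →
      IsGibbsMeasure μ (GibbsRel X) φ →
      ∃ φ' : (ℤ → B) → (ℤ → B) → ℝ,
        (∀ x x' : ℤ → A, x ∈ X → x' ∈ X → DoublyTransitive X x → DoublyTransitive X x' →
          GibbsRel X x x' → φ' (π x) (π x') = φ x x') ∧
        IsGibbsMeasure (μ.map π) (GibbsRel Y) φ' :=
  stmt18_general X hX hSFT Y π hcont hequiv hsurj hai μ hμprob hμconc hμerg hμsupp hμns
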